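/- Let K be a field of characteristic 0 and let f_1, f_2 ∈ K[x_1,…,x_n] be algebraically independent with d_i = deg f_i. Then s_2, the degree of the minimal polynomial of f̄_2 over K(f̄_1), satisfies s_2 ≥ d_1/gcd(d_1,d_2) (when f̄_2 is algebraic over K(f̄_1); if it is not algebraic the inequality holds trivially with s_2 = +∞). -/

import Mathlib

open MvPolynomial
noncomputable def leadTerm {K : Type*} [Field K] {n : ℕ} (p : MvPolynomial (Fin n) K) :
    MvPolynomial (Fin n) K :=
  (homogeneousComponent p.totalDegree) p

lemma leadTerm_ne_zero {K : Type*} [Field K] {n : ℕ} {p : MvPolynomial (Fin n) K} (hp : p ≠ 0) :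
    leadTerm p ≠ 0 := by
  obtain ⟨d, hd, hdeg⟩ := Finset.exists_mem_eq_sup p.support (support_nonempty.mpr hp)
    (fun s => s.sum fun _ e => e)
  intro h
  have hcd : coeff d (leadTerm p) = coeff d p := by
    rw [leadTerm, coeff_homogeneousComponent, if_pos]
    show d.degree = p.totalDegree
    rw [totalDegree, hdeg]
    simp [Finsupp.degree, Finsupp.sum]
    rfl
  rw [h] at hcd
  exact (mem_support_iff.mp hd) hcd.symm

lemma totalDegree_pos_of_transcendental {K : Type*} [Field K] {n : ℕ}
    {p : MvPolynomial (Fin n) K} (hp : Transcendental K p) : 0 < p.totalDegree := by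
  rcases Nat.eq_zero_or_pos p.totalDegree with h | h
  · exfalso
    rw [totalDegree_eq_zero_iff] at h
    have hC : p = C (coeff 0 p) := by
      ext d
      rcases eq_or_ne d 0 with rfl | hd
      · simp
      · rw [coeff_C, if_neg (Ne.symm hd)]
        by_contra hc
        exact hd (Finsupp.ext fun x => h d (mem_support_iff.mpr hc) x)
    exact hp (hC ▸ isAlgebraic_algebraMap (coeff 0 p))
  · exact h


lemma key_lemma {K : Type*} [Field K] {n : ℕ} {u v : MvPolynomial (Fin n) K} {d₁ d₂ : ℕ}
    (hu : u.IsHomogeneous d₁) (hv : v.IsHomogeneous d₂) (hu0 : u ≠ 0) (hv0 : v ≠ 0)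
    (hd₁ : 0 < d₁) {s N : ℕ} (c : ℕ → ℕ → K) {i₀ : ℕ} (hi₀ : i₀ < N) (hc : c s i₀ ≠ 0)
    (hrel : ∑ j ∈ Finset.range (s+1), ∑ i ∈ Finset.range N,
      MvPolynomial.C (c j i) * u ^ i * v ^ j = 0) :
    d₁ / Nat.gcd d₁ d₂ ≤ s := by
  by_contra hs
  push_neg at hs
  set g := Nat.gcd d₁ d₂ with hg
  have hgpos : 0 < g := Nat.gcd_pos_of_pos_left _ hd₁
  set a := d₁ / g with ha
  set m₀ := d₁ * i₀ + d₂ * s with hm₀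
  -- each (i,j) with nonzero contribution in degree m₀ must be (i₀, s)
  have hsingle : ∀ j, j < s + 1 → ∀ i, m₀ = d₁ * i + d₂ * j → j = s ∧ i = i₀ := by
    intro j hj i hij
    rcases eq_or_lt_of_le (Nat.lt_succ_iff.mp hj) with hjs | hjs
    · subst hjs
      refine ⟨rfl, ?_⟩
      have : d₁ * i₀ = d₁ * i := by omega
      exact (Nat.eq_of_mul_eq_mul_left hd₁ this).symm
    · exfalso
      -- j < s : derive a ∣ s - j
      have hsub : d₂ * (s - j) = d₁ * (i - i₀) := by
        have h1 : d₂ * s = d₂ * (s - j) + d₂ * j := by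
          rw [← Nat.mul_add, Nat.sub_add_cancel hjs.le]
        have h2 : i₀ ≤ i := by
          by_contra hii
          push_neg at hii
          have : d₁ * i < d₁ * i₀ := (Nat.mul_lt_mul_left hd₁).mpr hii
          omega
        have h3 : d₁ * i = d₁ * (i - i₀) + d₁ * i₀ := by
          rw [← Nat.mul_add, Nat.sub_add_cancel h2]
        omega
      have hdvd : d₁ ∣ (s - j) * d₂ := ⟨i - i₀, by rw [mul_comm (s-j) d₂, hsub]⟩
      have hab : Nat.Coprime a (d₂ / g) := Nat.coprime_div_gcd_div_gcd hgpos
      have hdvd2 : a ∣ (s - j) * (d₂ / g) := by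
        have hd1 : g * a = d₁ := Nat.mul_div_cancel' (Nat.gcd_dvd_left _ _)
        have he : g * ((s - j) * (d₂ / g)) = (s - j) * d₂ := by
          rw [mul_comm g, mul_assoc, Nat.div_mul_cancel (Nat.gcd_dvd_right d₁ d₂)]
        have : g * a ∣ g * ((s - j) * (d₂ / g)) := by rw [he, hd1]; exact hdvd
        exact (mul_dvd_mul_iff_left (hgpos.ne' : g ≠ 0)).mp this
      have := Nat.le_of_dvd (by omega) (hab.dvd_of_dvd_mul_right hdvd2)
      omega
  -- apply homogeneousComponent m₀ to the relation
  have hpiece : ∑ j ∈ Finset.range (s+1), ∑ i ∈ Finset.range N,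
      (if m₀ = d₁ * i + d₂ * j then MvPolynomial.C (c j i) * u ^ i * v ^ j else 0) = 0 := by
    have h2 : ∑ j ∈ Finset.range (s+1), ∑ i ∈ Finset.range N,
        (if m₀ = d₁ * i + d₂ * j then MvPolynomial.C (c j i) * u ^ i * v ^ j else 0)
        = homogeneousComponent m₀ (∑ j ∈ Finset.range (s+1), ∑ i ∈ Finset.range N,
            MvPolynomial.C (c j i) * u ^ i * v ^ j) := by
      rw [map_sum]
      refine Finset.sum_congr rfl fun j _ => ?_
      rw [map_sum]
      refine Finset.sum_congr rfl fun i _ => ?_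
      have hhom : (MvPolynomial.C (c j i) * u ^ i * v ^ j).IsHomogeneous (d₁ * i + d₂ * j) :=
        ((hu.pow i).C_mul _).mul (hv.pow j)
      rw [homogeneousComponent_of_mem hhom]
    rw [h2, hrel, map_zero]
  have hone : MvPolynomial.C (c s i₀) * u ^ i₀ * v ^ s = 0 := by
    rw [← hpiece]
    rw [Finset.sum_eq_single_of_mem s (Finset.self_mem_range_succ s)]
    · rw [Finset.sum_eq_single_of_mem i₀ (Finset.mem_range.mpr hi₀)]
      · rw [if_pos rfl]
      · intro i _ hi
        rw [if_neg]
        intro hcond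
        exact hi ((hsingle s (Nat.lt_succ_self s) i hcond).2)
    · intro j hj hjs
      refine Finset.sum_eq_zero fun i _ => ?_
      rw [if_neg]
      intro hcond
      exact hjs (hsingle j (Finset.mem_range.mp hj) i hcond).1
  have : MvPolynomial.C (c s i₀) * u ^ i₀ * v ^ s ≠ 0 :=
    mul_ne_zero (mul_ne_zero (fun h => hc (by simpa using h)) (pow_ne_zero _ hu0))
      (pow_ne_zero _ hv0)
  exact this hone

open Classical in
/-- The degree `s₂` of the minimal polynomial of `f̄₂` over `K(f̄₁)` (viewed
inside the fraction field of the polynomial ring), or `+∞` if `f̄₂` is not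
algebraic over this field. -/
noncomputable def s2deg {K : Type*} [Field K] {n : ℕ}
    (f1 f2 : MvPolynomial (Fin n) K) : ℕ∞ :=
  let L := FractionRing (MvPolynomial (Fin n) K)
  let F : Subfield L := Subfield.closure
    (Set.range (algebraMap K L) ∪ {algebraMap (MvPolynomial (Fin n) K) L (leadTerm f1)})
  let x : L := algebraMap (MvPolynomial (Fin n) K) L (leadTerm f2)
  if IsAlgebraic F x then ((minpoly F x).natDegree : ℕ∞) else ⊤

/-- for algebraically independent `f₁, f₂`, the degree `s₂` of the
minimal polynomial of `f̄₂` over `K(f̄₁)` satisfies `s₂ ≥ d₁ / gcd(d₁, d₂)`. -/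
theorem s2_ge {K : Type*} [Field K] [CharZero K] {n : ℕ}
    (f : Fin 2 → MvPolynomial (Fin n) K) (hf : AlgebraicIndependent K f) :
    (((f 0).totalDegree / Nat.gcd (f 0).totalDegree (f 1).totalDegree : ℕ) : ℕ∞) ≤
      s2deg (f 0) (f 1) := by
  classical
  simp only [s2deg]
  set L := FractionRing (MvPolynomial (Fin n) K) with hL
  set u := leadTerm (f 0) with hu
  set v := leadTerm (f 1) with hv
  set y := algebraMap (MvPolynomial (Fin n) K) L u with hy
  set x := algebraMap (MvPolynomial (Fin n) K) L v with hxdef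
  set F : Subfield L := Subfield.closure (Set.range (algebraMap K L) ∪ {y}) with hF
  by_cases hx : IsAlgebraic F x
  · rw [if_pos hx]
    rw [Nat.cast_le]
    have hf0t : Transcendental K (f 0) := hf.transcendental 0
    have hf1t : Transcendental K (f 1) := hf.transcendental 1
    have hd1 : 0 < (f 0).totalDegree := totalDegree_pos_of_transcendental hf0t
    have hf0 : f 0 ≠ 0 := fun h => hf0t (h ▸ isAlgebraic_zero)
    have hf1 : f 1 ≠ 0 := fun h => hf1t (h ▸ isAlgebraic_zero)
    have hu0 : u ≠ 0 := leadTerm_ne_zero hf0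
    have hv0 : v ≠ 0 := leadTerm_ne_zero hf1
    set P := minpoly F x with hP
    set s := P.natDegree with hs
    have hint : IsIntegral F x := hx.isIntegral
    have hmonic : P.Monic := minpoly.monic hint
    have hmem : ∀ j : ℕ, ∃ p q : Polynomial K, Polynomial.aeval y q ≠ 0 ∧
        ((P.coeff j : L)) * Polynomial.aeval y q = Polynomial.aeval y p := by
      intro j
      have h1 : (P.coeff j : L) ∈ IntermediateField.adjoin K {y} := (P.coeff j).2
      obtain ⟨r, t, hrt⟩ := (IntermediateField.mem_adjoin_simple_iff K _).mp h1
      by_cases ht : Polynomial.aeval y t = 0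
      · exact ⟨0, 1, by simp, by rw [hrt, ht, div_zero]; simp⟩
      · exact ⟨r, t, ht, by rw [hrt, div_mul_cancel₀ _ ht]⟩
    choose p q hq hpq using hmem
    set D := ∏ k ∈ Finset.range (s+1), q k with hD
    set r : ℕ → Polynomial K := fun j => p j * ∏ k ∈ (Finset.range (s+1)).erase j, q k with hr
    have hDy : Polynomial.aeval y D ≠ 0 := by
      rw [hD, map_prod]
      exact Finset.prod_ne_zero_iff.mpr fun k _ => hq k
    have hrj : ∀ j ∈ Finset.range (s+1),
        Polynomial.aeval y (r j) = (P.coeff j : L) * Polynomial.aeval y D := by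
      intro j hj
      rw [hr]
      simp only
      rw [map_mul, map_prod, ← hpq j, hD, map_prod, ← Finset.mul_prod_erase _ _ hj]
      ring
    have hrel0 : ∑ j ∈ Finset.range (s+1), Polynomial.aeval y (r j) * x ^ j = 0 := by
      have h0 : Polynomial.aeval x P = 0 := minpoly.aeval F x
      have hexp : Polynomial.aeval x P
          = ∑ j ∈ Finset.range (s+1), (P.coeff j : L) * x ^ j := by
        rw [Polynomial.aeval_eq_sum_range]
        refine Finset.sum_congr rfl fun j _ => ?_
        rw [Algebra.smul_def]
        rfl
      calc ∑ j ∈ Finset.range (s+1), Polynomial.aeval y (r j) * x ^ j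
          = ∑ j ∈ Finset.range (s+1), ((P.coeff j : L) * x ^ j) * Polynomial.aeval y D := by
            refine Finset.sum_congr rfl fun j hj => ?_
            rw [hrj j hj]; ring
        _ = (∑ j ∈ Finset.range (s+1), (P.coeff j : L) * x ^ j) * Polynomial.aeval y D := by
            rw [Finset.sum_mul]
        _ = 0 := by rw [← hexp, h0, zero_mul]
    have hSL : algebraMap (MvPolynomial (Fin n) K) L
        (∑ j ∈ Finset.range (s+1), Polynomial.aeval u (r j) * v ^ j) = 0 := by
      rw [map_sum, ← hrel0]
      refine Finset.sum_congr rfl fun j hj => ?_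
      rw [map_mul, map_pow, hy, Polynomial.aeval_algebraMap_apply]
    have hS : ∑ j ∈ Finset.range (s+1), Polynomial.aeval u (r j) * v ^ j = 0 :=
      IsFractionRing.injective (MvPolynomial (Fin n) K) L (by simpa using hSL)
    have hrs_val : Polynomial.aeval y (r s) = Polynomial.aeval y D := by
      rw [hrj s (Finset.self_mem_range_succ s)]
      have h1 : P.coeff s = 1 := hmonic.coeff_natDegree
      rw [h1]
      push_cast
      rw [one_mul]
    have hrs0 : r s ≠ 0 := by
      intro h
      rw [h, map_zero] at hrs_val
      exact hDy hrs_val.symm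
    set N := (Finset.range (s+1)).sup (fun j => (r j).natDegree) + 1 with hN
    have hdegN : ∀ j ∈ Finset.range (s+1), (r j).natDegree < N := fun j hj =>
      Nat.lt_succ_of_le (Finset.le_sup (f := fun j => (r j).natDegree) hj)
    have hi₀ : (r s).natDegree < N := hdegN s (Finset.self_mem_range_succ s)
    have hc : (r s).coeff (r s).natDegree ≠ 0 := by
      exact Polynomial.leadingCoeff_ne_zero.mpr hrs0
    have hrel : ∑ j ∈ Finset.range (s+1), ∑ i ∈ Finset.range N,
        MvPolynomial.C ((r j).coeff i) * u ^ i * v ^ j = 0 := by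
      rw [← hS]
      refine Finset.sum_congr rfl fun j hj => ?_
      rw [Polynomial.aeval_eq_sum_range' (hdegN j hj) u, Finset.sum_mul]
      refine Finset.sum_congr rfl fun i _ => ?_
      rw [smul_eq_C_mul]
    exact key_lemma (homogeneousComponent_isHomogeneous _ _)
      (homogeneousComponent_isHomogeneous _ _) hu0 hv0 hd1 (fun j i => (r j).coeff i)
      hi₀ hc hrel
  · rw [if_neg hx]
    exact le_top
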